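/- arXiv:1608.07891 — 2 statements merged into one kernel-verified Lean document; each statement's English description precedes it below -/
import Mathlib

section
/- Let N ≥ 2 be an integer and T ≥ 1 a real number. Set B = (4.5 · N · log N)^(−1/3) and let τ = ⌈B · T^(1/3)⌉. Then τ · √(4.5 · (T/τ) · N · log N) + T/τ + τ ≤ 2 · B⁻¹ · T^(2/3) + (B + B⁻²) · T^(1/3) + 1. (This is the arithmetic content of Theorem 1: combining the any-time EXP3 regret bound R(T) ≤ √(4.5 · T · N · log N) with the batching reduction R'(T) ≤ τ·R(T/τ) + T/τ + τ for a 1-memory-bounded adversary yields the BREW regret bound R(T) ≤ 2B⁻¹T^(2/3) + (B + B⁻²)T^(1/3) + 1.) -/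
/-!
Write `4.5 · N · log N = b³` and `T = x³`, so that `B = b⁻¹` and the ceiling gives
`b⁻¹ x ≤ τ ≤ b⁻¹ x + 1`. Then `τ √(b³x³/τ) = √(b²x³ · bτ) ≤ √(b²x³ (x + b)) ≤ b x² + b² x`,
`T/τ ≤ x³/(b⁻¹ x) = b x²` and `τ ≤ b⁻¹ x + 1`; adding the three bounds gives the claim.
-/

open Real

lemma rpow_one_third_pow_three {a : ℝ} (ha : 0 ≤ a) : (a ^ ((1 : ℝ) / 3)) ^ 3 = a := by
  simpa [one_div] using rpow_inv_natCast_pow (n := 3) ha three_ne_zero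

lemma rpow_two_thirds_eq_sq {a : ℝ} (ha : 0 ≤ a) : a ^ ((2 : ℝ) / 3) = (a ^ ((1 : ℝ) / 3)) ^ 2 := by
  rw [← rpow_natCast, ← rpow_mul ha]
  norm_num

lemma mul_sqrt_div_self {y τ : ℝ} (hτ : 0 ≤ τ) : τ * √(y / τ) = √(y * τ) := by
  rcases hτ.eq_or_lt with rfl | hτ
  · simp
  rw [show y * τ = τ ^ 2 * (y / τ) by field_simp, sqrt_mul (sq_nonneg τ), sqrt_sq hτ.le]

section batching

variable {b x τ : ℝ}

lemma mul_sqrt_cube_div_le (hb : 0 < b) (hx : 0 ≤ x) (hτ : 0 ≤ τ) (hτx : τ ≤ b⁻¹ * x + 1) :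
    τ * √(b ^ 3 * x ^ 3 / τ) ≤ b * x ^ 2 + b ^ 2 * x := by
  have hbτ : b * τ ≤ x + b := by
    calc b * τ ≤ b * (b⁻¹ * x + 1) := by gcongr
      _ = x + b := by field_simp
  rw [mul_sqrt_div_self hτ, sqrt_le_iff]
  refine ⟨by positivity, ?_⟩
  calc b ^ 3 * x ^ 3 * τ = b ^ 2 * x ^ 3 * (b * τ) := by ring
    _ ≤ b ^ 2 * x ^ 3 * (x + b) := by gcongr
    _ ≤ (b * x ^ 2 + b ^ 2 * x) ^ 2 := by nlinarith [pow_nonneg hb.le 3, pow_nonneg hx 3]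

lemma cube_div_le (hb : 0 < b) (hx : 0 < x) (hxτ : b⁻¹ * x ≤ τ) : x ^ 3 / τ ≤ b * x ^ 2 := by
  have hτ : 0 < τ := lt_of_lt_of_le (by positivity) hxτ
  rw [div_le_iff₀ hτ]
  calc x ^ 3 = b * x ^ 2 * (b⁻¹ * x) := by field_simp
    _ ≤ b * x ^ 2 * τ := by gcongr

lemma batched_regret_le (hb : 0 < b) (hx : 0 < x) (hxτ : b⁻¹ * x ≤ τ) (hτx : τ ≤ b⁻¹ * x + 1) :
    τ * √(b ^ 3 * x ^ 3 / τ) + x ^ 3 / τ + τ ≤ 2 * b * x ^ 2 + (b⁻¹ + b ^ 2) * x + 1 := by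
  have hτ : 0 ≤ τ := le_trans (by positivity) hxτ
  linarith [mul_sqrt_cube_div_le hb hx.le hτ hτx, cube_div_le hb hx hxτ]

end batching

/-- Arithmetic content of Theorem 1 (BREW regret bound): with
`B = (4.5 · N · log N)^(-1/3)` and batch size `τ = ⌈B · T^(1/3)⌉`,
`τ·√(4.5·(T/τ)·N·log N) + T/τ + τ ≤ 2B⁻¹T^(2/3) + (B + B⁻²)T^(1/3) + 1`. -/
theorem brew_regret_arith (N : ℕ) (hN : 2 ≤ N) (T : ℝ) (hT : 1 ≤ T)
    (B : ℝ) (hB : B = (4.5 * (N : ℝ) * Real.log N) ^ (-(1 : ℝ) / 3))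
    (τ : ℝ) (hτ : τ = ((⌈B * T ^ ((1 : ℝ) / 3)⌉ : ℤ) : ℝ)) :
    τ * Real.sqrt (4.5 * (T / τ) * (N : ℝ) * Real.log N) + T / τ + τ ≤
      2 * B⁻¹ * T ^ ((2 : ℝ) / 3) + (B + B⁻¹ ^ 2) * T ^ ((1 : ℝ) / 3) + 1 := by
  set C : ℝ := 4.5 * (N : ℝ) * Real.log N
  have hC : 0 < C := by
    have hN1 : (1 : ℝ) < N := by exact_mod_cast hN
    have := log_pos hN1
    positivity
  have hT0 : 0 ≤ T := by linarith
  rw [rpow_two_thirds_eq_sq hT0]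
  set x := T ^ ((1 : ℝ) / 3)
  set b := C ^ ((1 : ℝ) / 3)
  have hx : 0 < x := rpow_pos_of_pos (by linarith) _
  have hb : 0 < b := rpow_pos_of_pos hC _
  have hBb : B = b⁻¹ := by
    rw [hB, show -(1 : ℝ) / 3 = -(1 / 3) by norm_num, rpow_neg hC.le]
  have hsqrt_arg : 4.5 * (T / τ) * (N : ℝ) * Real.log N = b ^ 3 * T / τ := by
    rw [rpow_one_third_pow_three hC.le]
    ring
  have hbound := batched_regret_le hb hx (τ := τ) (by rw [hτ, ← hBb]; exact Int.le_ceil _)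
    (by rw [hτ, ← hBb]; exact (Int.ceil_lt_add_one _).le)
  rw [rpow_one_third_pow_three hT0] at hbound
  rw [hsqrt_arg, hBb, inv_inv]
  linarith
end

section
/- Define reward sequences for two arms by R_1(1)=0.9, R_1(2)=0.6; R_2(1)=0.4, R_2(2)=0.6; and R_t(1)=0.9, R_t(2)=0.6 for all t ≥ 3, with threshold θ = 0.5. Define the 3GPP threshold-handover policy by a_1 = 1 if R_1(1) ≥ R_1(2) and a_1 = 2 otherwise; and for t ≥ 2, a_t = a_{t−1} if R_t(a_{t−1}) ≥ θ, and otherwise a_t is the arm maximizing R_t(·). Then a_1 = 1 and a_t = 2 for all t ≥ 2, so for every integer T ≥ 2 the cumulative regret of the policy with respect to the best fixed arm satisfies Σ_{t=1}^{T} R_t(1) − Σ_{t=1}^{T} R_t(a_t) = 0.3·T − 0.8, which grows linearly in T. (Non-stochastic part of the proof of Proposition 1: the 3GPP handover protocol achieves regret Ω(T) under a non-stochastic reward model even with zero handover cost.) -/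
/-!
Once the policy sits on an arm whose metric never again drops below `θ`, it never moves.
Slot 2 pushes it from arm `0` (metric `0.4 < θ`) to arm `1`, whose metric `0.6` stays above `θ`
forever, while arm `0` returns to `0.9`; so from slot 3 on each slot adds `0.3` to the regret,
after the slot-2 contribution of `0.4 - 0.6 = -0.2`.
-/

open Finset

/-- `b t` is the arm the policy hands over to at slot `t`. -/
theorem threshold_policy_eq_of_forall_le {ι : Type*} (R : ℕ → ι → ℝ) (θ : ℝ) (a b : ℕ → ι)
    (hat : ∀ t, 2 ≤ t → a t = if θ ≤ R t (a (t - 1)) then a (t - 1) else b t)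
    {s : ℕ} (hs : 1 ≤ s) {i : ι} (has : a s = i) (hR : ∀ t, s < t → θ ≤ R t i) :
    ∀ t, s ≤ t → a t = i := by
  intro t hst
  induction t, hst using Nat.le_induction with
  | base => exact has
  | succ t hst ih =>
    rw [hat (t + 1) (by omega), Nat.add_sub_cancel, ih, if_pos (hR (t + 1) (by omega))]

theorem sum_Icc_one_eq_add_mul_of_eq_const (f : ℕ → ℝ) {n : ℕ} {c : ℝ}
    (hf : ∀ t, n < t → f t = c) :
    ∀ T, n ≤ T → ∑ t ∈ Icc 1 T, f t = ∑ t ∈ Icc 1 n, f t + c * (T - n) := by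
  intro T hnT
  induction T, hnT using Nat.le_induction with
  | base => simp
  | succ T hnT ih =>
    rw [sum_Icc_succ_top (by omega), ih, hf (T + 1) (by omega)]
    push_cast
    ring

/-- Non-stochastic part of the proof of Proposition 1: on the explicit two-arm reward
sequence (arm `0` is SBS 1, arm `1` is SBS 2) with threshold `θ = 0.5`, the 3GPP
threshold-handover policy selects arm `0` at slot 1 and arm `1` at every slot `t ≥ 2`,
so its regret with respect to the best fixed arm is `0.3·T − 0.8`, linear in `T`. -/
theorem threegpp_linear_regret (R : ℕ → Fin 2 → ℝ)
    (h11 : R 1 0 = 0.9) (h12 : R 1 1 = 0.6)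
    (h21 : R 2 0 = 0.4) (h22 : R 2 1 = 0.6)
    (h3 : ∀ t, 3 ≤ t → R t 0 = 0.9 ∧ R t 1 = 0.6)
    (θ : ℝ) (hθ : θ = 0.5)
    (a : ℕ → Fin 2)
    (ha1 : a 1 = if R 1 1 ≤ R 1 0 then 0 else 1)
    (hat : ∀ t, 2 ≤ t →
      a t = if θ ≤ R t (a (t - 1)) then a (t - 1)
            else if R t 1 ≤ R t 0 then 0 else 1) :
    a 1 = 0 ∧ (∀ t, 2 ≤ t → a t = 1) ∧
      ∀ T : ℕ, 2 ≤ T →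
        (∑ t ∈ Finset.Icc 1 T, R t 0) - (∑ t ∈ Finset.Icc 1 T, R t (a t)) =
          0.3 * (T : ℝ) - 0.8 := by
  have ha1' : a 1 = 0 := by
    rw [ha1, h11, h12]
    norm_num
  have ha2 : a 2 = 1 := by
    rw [hat 2 le_rfl, ha1', h21, h22, hθ]
    norm_num
  have ha : ∀ t, 2 ≤ t → a t = 1 :=
    threshold_policy_eq_of_forall_le R θ a _ hat (by norm_num) ha2
      fun t ht => by rw [(h3 t ht).2, hθ]; norm_num
  refine ⟨ha1', ha, fun T hT => ?_⟩
  have hstep : ∀ t, 2 < t → R t 0 - R t (a t) = 0.3 := fun t ht => by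
    rw [ha t ht.le, (h3 t ht).1, (h3 t ht).2]
    norm_num
  rw [← sum_sub_distrib, sum_Icc_one_eq_add_mul_of_eq_const _ hstep T hT]
  norm_num [sum_Icc_succ_top, ha1', ha2, h11, h21, h22]
  ring
end
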